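/- Let (Ω, 𝒜, μ) be a finite measure space for which there exists a sequence (A_k)_{k ≥ 1} of pairwise disjoint measurable sets with μ(A_k) > 0 for all k. Then there exists a measurable function f : Ω → [0, ∞) such that ∫ f^p dμ < ∞ for every real p ∈ [1, ∞), but f is not μ-essentially bounded. -/

import Mathlib

/-! The sets `A k` are disjoint in a finite measure space, so `μ (A k) → 0`, and a subsequence
`B n = A (φ n)` satisfies `μ (B n) ≤ 2⁻ⁿ`. The step function equal to `n` on `B n` exceeds every
constant on a set of positive measure, while `∫ fᵖ dμ ≤ ∑ nᵖ 2⁻ⁿ < ∞` for every `p`. -/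

open MeasureTheory ENNReal NNReal Filter Topology

lemma exists_strictMono_le_of_tendsto {α : Type*} [TopologicalSpace α] [LinearOrder α]
    [OrderTopology α] {a : ℕ → α} {l : α} (ha : Tendsto a atTop (𝓝 l)) {ε : ℕ → α}
    (hε : ∀ n, l < ε n) : ∃ φ : ℕ → ℕ, StrictMono φ ∧ ∀ n, a (φ n) ≤ ε n :=
  extraction_forall_of_eventually fun n => ha.eventually (ge_mem_nhds (hε n))

lemma tendsto_measure_atTop_zero_of_pairwise_disjoint {Ω : Type*} [MeasurableSpace Ω]
    {μ : Measure Ω} [IsFiniteMeasure μ] {A : ℕ → Set Ω} (hA : ∀ k, NullMeasurableSet (A k) μ)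
    (hd : Pairwise (Function.onFun Disjoint A)) :
    Tendsto (fun k => μ (A k)) atTop (𝓝 0) := by
  refine ENNReal.tendsto_atTop_zero_of_tsum_ne_top ?_
  rw [← measure_iUnion₀ (hd.mono fun _ _ h => h.aedisjoint) hA]
  exact measure_ne_top μ _

lemma summable_natCast_rpow_mul_geometric {p r : ℝ} (hp : 0 ≤ p) (hr₀ : 0 ≤ r)
    (hr₁ : r < 1) : Summable fun n : ℕ => (n : ℝ) ^ p * r ^ n := by
  refine (summable_pow_mul_geometric_of_norm_lt_one ⌈p⌉₊ (r := r)
    (by rwa [Real.norm_of_nonneg hr₀])).of_nonneg_of_le (fun n => by positivity) fun n => ?_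
  gcongr
  rcases n.eq_zero_or_pos with rfl | hn
  · rcases hp.eq_or_lt with rfl | hp
    · simp
    · simp [Real.zero_rpow hp.ne', zero_pow (Nat.ceil_pos.2 hp).ne']
  · rw [← Real.rpow_natCast]
    exact Real.rpow_le_rpow_of_exponent_le (Nat.one_le_cast.2 hn) (Nat.le_ceil p)

lemma tsum_natCast_rpow_mul_inv_two_pow_ne_top {p : ℝ} (hp : 0 ≤ p) :
    ∑' n : ℕ, (n : ℝ≥0∞) ^ p * 2⁻¹ ^ n ≠ ∞ := by
  have hterm (n : ℕ) : (n : ℝ≥0∞) ^ p * 2⁻¹ ^ n = ENNReal.ofReal ((n : ℝ) ^ p * 2⁻¹ ^ n) := by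
    rw [ENNReal.ofReal_mul (by positivity), ← ofReal_rpow_of_nonneg n.cast_nonneg hp,
      ENNReal.ofReal_natCast, ENNReal.ofReal_pow (by norm_num), ENNReal.ofReal_inv_of_pos two_pos,
      ENNReal.ofReal_ofNat]
  rw [tsum_congr hterm, ← ENNReal.ofReal_tsum_of_nonneg (fun n => by positivity)
    (summable_natCast_rpow_mul_geometric hp (by norm_num) (by norm_num))]
  exact ENNReal.ofReal_ne_top

section Indicator

variable {α M : Type*} [AddCommMonoid M] [TopologicalSpace M] {s : ℕ → Set α}

lemma tsum_indicator_apply_of_mem (hs : Pairwise (Function.onFun Disjoint s)) (c : ℕ → M)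
    {x : α} {j : ℕ} (hx : x ∈ s j) : ∑' k, (s k).indicator (fun _ => c k) x = c j := by
  rw [tsum_eq_single j fun k hk => Set.indicator_of_notMem (hs hk |>.notMem_of_mem_right hx) _]
  exact Set.indicator_of_mem hx _

lemma apply_tsum_indicator {N : Type*} [AddCommMonoid N] [TopologicalSpace N]
    (hs : Pairwise (Function.onFun Disjoint s)) (c : ℕ → M) {g : M → N} (hg : g 0 = 0) (x : α) :
    g (∑' k, (s k).indicator (fun _ => c k) x) = ∑' k, (s k).indicator (fun _ => g (c k)) x := by
  by_cases hx : ∃ j, x ∈ s j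
  · obtain ⟨j, hj⟩ := hx
    rw [tsum_indicator_apply_of_mem hs _ hj, tsum_indicator_apply_of_mem hs _ hj]
  · simp [Set.indicator_of_notMem, not_exists.1 hx _, hg]

end Indicator

lemma lintegral_tsum_indicator_const {Ω : Type*} [MeasurableSpace Ω] (μ : Measure Ω)
    {s : ℕ → Set Ω} (hs : ∀ k, MeasurableSet (s k)) (c : ℕ → ℝ≥0∞) :
    ∫⁻ ω, ∑' k, (s k).indicator (fun _ => c k) ω ∂μ = ∑' k, c k * μ (s k) := by
  rw [lintegral_tsum fun k => (measurable_const.indicator (hs k)).aemeasurable]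
  exact tsum_congr fun k => lintegral_indicator_const (hs k) _

/-- Let `(Ω, 𝒜, μ)` be a finite measure space admitting a sequence of
pairwise disjoint measurable sets of positive measure.  Then there is a measurable
function `f : Ω → [0, ∞)` with `∫ f^p dμ < ∞` for every real `p ∈ [1, ∞)` which is not
`μ`-essentially bounded. -/
theorem exists_unbounded_function_in_all_Lp
    {Ω : Type*} [MeasurableSpace Ω] (μ : Measure Ω) [IsFiniteMeasure μ]
    (A : ℕ → Set Ω) (hmeas : ∀ k, MeasurableSet (A k))
    (hdisj : Pairwise (Function.onFun Disjoint A))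
    (hpos : ∀ k, 0 < μ (A k)) :
    ∃ f : Ω → ℝ≥0, Measurable f ∧
      (∀ p : ℝ, 1 ≤ p → (∫⁻ ω, (f ω : ℝ≥0∞) ^ p ∂μ) < ∞) ∧
      ¬ ∃ C : ℝ≥0, ∀ᵐ ω ∂μ, f ω ≤ C := by
  obtain ⟨φ, hφ, hsmall⟩ := exists_strictMono_le_of_tendsto (ε := fun n => 2⁻¹ ^ n)
    (tendsto_measure_atTop_zero_of_pairwise_disjoint (μ := μ)
      (fun k => (hmeas k).nullMeasurableSet) hdisj)
    fun n => ENNReal.pow_pos (by simp) n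
  set B := fun n => A (φ n)
  have hBd : Pairwise (Function.onFun Disjoint B) := hdisj.comp_of_injective hφ.injective
  set f : Ω → ℝ≥0 := fun ω => ∑' n, (B n).indicator (fun _ => (n : ℝ≥0)) ω
  refine ⟨f, Measurable.tsum fun n => measurable_const.indicator (hmeas _), fun p hp => ?_, ?_⟩
  · have hfp (ω : Ω) :
        (f ω : ℝ≥0∞) ^ p = ∑' n, (B n).indicator (fun _ => (n : ℝ≥0∞) ^ p) ω := by
      simpa using apply_tsum_indicator hBd (fun n => (n : ℝ≥0)) (x := ω)
        (g := fun t : ℝ≥0 => (t : ℝ≥0∞) ^ p) (by simp [zero_rpow_of_pos (by linarith)])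
    calc ∫⁻ ω, (f ω : ℝ≥0∞) ^ p ∂μ
        = ∑' n : ℕ, (n : ℝ≥0∞) ^ p * μ (B n) := by
          simp_rw [hfp]
          exact lintegral_tsum_indicator_const μ (fun _ => hmeas _) _
      _ ≤ ∑' n : ℕ, (n : ℝ≥0∞) ^ p * 2⁻¹ ^ n :=
          ENNReal.tsum_le_tsum fun n => by gcongr; exact hsmall n
      _ < ∞ := (tsum_natCast_rpow_mul_inv_two_pow_ne_top (by linarith)).lt_top
  · rintro ⟨C, hC⟩
    obtain ⟨j, hj⟩ := exists_nat_gt C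
    obtain ⟨ω, hω, hle⟩ := ((frequently_ae_mem_iff.2 (hpos (φ j)).ne').and_eventually hC).exists
    rw [show f ω = j from tsum_indicator_apply_of_mem hBd _ hω] at hle
    exact (hle.trans_lt hj).false
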